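/- Let G be a countable weakly unperforated simple partially ordered abelian group with order unit u. If G has the rationally Riesz property (for all x₁,x₂ ≤ y₁,y₂ there exist z ∈ G and positive integers m, n with m·x_i ≤ n·z ≤ m·y_j for all i,j), then the ordered group G ⊗ ℚ (with positive cone generated so that weak unperforation holds, i.e., (G⊗ℚ)₊ = {x : s(x) > 0 for all states s} ∪ {0}) has the Riesz interpolation property. -/
import Mathlib


/-- A state on a partially ordered abelian group with positive cone `P` and order unit
`u` is a positive additive homomorphism into `ℝ` normalized at `u`. -/
def IsState {G : Type*} [AddCommGroup G] (P : Set G) (u : G) (s : G →+ ℝ) : Prop :=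
  (∀ x ∈ P, 0 ≤ s x) ∧ s u = 1

/-- The canonical extension of a state `s` of `G` to `G ⊗ ℚ`, `g ⊗ r ↦ r • s g`. -/
noncomputable def ratExt {G : Type*} [AddCommGroup G] (s : G →+ ℝ) :
    TensorProduct ℤ G ℚ →+ ℝ :=
  ((LinearMap.mul' ℤ ℝ).comp
    (TensorProduct.map s.toIntLinearMap
      (Rat.castHom ℝ).toAddMonoidHom.toIntLinearMap)).toAddMonoidHom

/-- The positive cone of `G ⊗ ℚ`: `{0}` together with the elements on which (the
canonical extension of) every state of `G` is strictly positive. -/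
def ratCone {G : Type*} [AddCommGroup G] (P : Set G) (u : G) :
    Set (TensorProduct ℤ G ℚ) :=
  {0} ∪ {x | ∀ s : G →+ ℝ, IsState P u s → 0 < ratExt s x}

lemma ratExt_tmul {G : Type*} [AddCommGroup G] (s : G →+ ℝ) (g : G) (q : ℚ) :
    ratExt s (g ⊗ₜ[ℤ] q) = s g * (q : ℝ) := by
  simp [ratExt]

lemma rescale {G : Type*} [AddCommGroup G] (g : G) (k m : ℕ) (hk : 0 < k) :
    g ⊗ₜ[ℤ] ((m : ℚ))⁻¹ = (k • g) ⊗ₜ[ℤ] (((k * m : ℕ) : ℚ))⁻¹ := by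
  rw [← natCast_zsmul, TensorProduct.smul_tmul]
  congr 1
  have : (k : ℚ) ≠ 0 := by positivity
  push_cast
  rw [zsmul_eq_mul]
  push_cast
  rw [mul_inv, ← mul_assoc, mul_inv_cancel₀ this, one_mul]

lemma exists_rep {G : Type*} [AddCommGroup G] (t : TensorProduct ℤ G ℚ) :
    ∃ (g : G) (m : ℕ), 0 < m ∧ t = g ⊗ₜ[ℤ] ((m : ℚ))⁻¹ := by
  induction t using TensorProduct.induction_on with
  | zero => exact ⟨0, 1, one_pos, by simp⟩
  | tmul g q =>
    refine ⟨q.num • g, q.den, q.pos, ?_⟩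
    rw [TensorProduct.smul_tmul, zsmul_eq_mul]
    congr 1
    rw [← div_eq_mul_inv, Rat.num_div_den]
  | add a b ha hb =>
    obtain ⟨g, m, hm, rfl⟩ := ha
    obtain ⟨h, n, hn, rfl⟩ := hb
    refine ⟨n • g + m • h, m * n, Nat.mul_pos hm hn, ?_⟩
    rw [TensorProduct.add_tmul, rescale g n m hn, rescale h m n hm]
    rw [mul_comm n m]

lemma zero_mem_ratCone {G : Type*} [AddCommGroup G] (P : Set G) (u : G) :
    (0 : TensorProduct ℤ G ℚ) ∈ ratCone P u := Or.inl rfl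

lemma tmul_mem_ratCone {G : Type*} [AddCommGroup G] (P : Set G) (u : G)
    (hsimple : ∀ p ∈ P, p ≠ 0 → ∀ g : G, ∃ n : ℕ, n • p - g ∈ P)
    (p : G) (hp : p ∈ P) (q : ℚ) (hq : 0 < q) : p ⊗ₜ[ℤ] q ∈ ratCone P u := by
  by_cases h : p = 0
  · subst h
    exact Or.inl (by simp)
  · right
    intro s hs
    obtain ⟨n, hn⟩ := hsimple p hp h u
    have h1 : 0 ≤ s (n • p - u) := hs.1 _ hn
    rw [map_sub, AddMonoidHom.map_nsmul, hs.2, nsmul_eq_mul] at h1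
    have hsp : 0 < s p := by
      rcases Nat.eq_zero_or_pos n with h0 | h0
      · subst h0; simp at h1; linarith
      · have hn' : (0:ℝ) < n := by exact_mod_cast h0
        nlinarith
    rw [ratExt_tmul]
    have : (0:ℝ) < (q : ℝ) := by exact_mod_cast hq
    positivity

/-- Let `G` be a countable weakly unperforated simple partially ordered abelian group
with order unit `u` (weak unperforation: a nonzero `x` is positive iff `s x > 0` for
every state `s`).  If `G` has the rationally Riesz property, then `G ⊗ ℚ`, with the
positive cone `{x : s(x) > 0 for all states s} ∪ {0}`, has the Riesz interpolation
property. -/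
theorem stmt_14 {G : Type*} [AddCommGroup G] [Countable G] (P : Set G) (u : G)
    (hP0 : (0 : G) ∈ P) (hPadd : ∀ x ∈ P, ∀ y ∈ P, x + y ∈ P)
    (hPpointed : ∀ x ∈ P, -x ∈ P → x = 0)
    (huP : u ∈ P) (hu : ∀ g : G, ∃ n : ℕ, n • u - g ∈ P)
    -- simplicity: every nonzero positive element is an order unit
    (hsimple : ∀ p ∈ P, p ≠ 0 → ∀ g : G, ∃ n : ℕ, n • p - g ∈ P)
    -- weak unperforation: for nonzero x, x ∈ P ↔ s x > 0 for all states s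
    (hwu : ∀ x : G, x ≠ 0 → (x ∈ P ↔ ∀ s : G →+ ℝ, IsState P u s → 0 < s x))
    -- rationally Riesz property
    (hrR : ∀ x₁ x₂ y₁ y₂ : G,
      y₁ - x₁ ∈ P → y₂ - x₁ ∈ P → y₁ - x₂ ∈ P → y₂ - x₂ ∈ P →
      ∃ (z : G) (m n : ℕ), 0 < m ∧ 0 < n ∧
        n • z - m • x₁ ∈ P ∧ n • z - m • x₂ ∈ P ∧
        m • y₁ - n • z ∈ P ∧ m • y₂ - n • z ∈ P) :
    -- conclusion: G ⊗ ℚ has the Riesz interpolation property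
    ∀ x₁ x₂ y₁ y₂ : TensorProduct ℤ G ℚ,
      y₁ - x₁ ∈ ratCone P u → y₂ - x₁ ∈ ratCone P u →
      y₁ - x₂ ∈ ratCone P u → y₂ - x₂ ∈ ratCone P u →
      ∃ z : TensorProduct ℤ G ℚ,
        z - x₁ ∈ ratCone P u ∧ z - x₂ ∈ ratCone P u ∧
        y₁ - z ∈ ratCone P u ∧ y₂ - z ∈ ratCone P u := by
  intro x₁ x₂ y₁ y₂ h11 h21 h12 h22
  by_cases e11 : y₁ - x₁ = 0
  · have h : y₁ = x₁ := by rwa [sub_eq_zero] at e11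
    subst h
    exact ⟨y₁, by simpa using zero_mem_ratCone P u, h12,
      by simpa using zero_mem_ratCone P u, h21⟩
  by_cases e21 : y₂ - x₁ = 0
  · have h : y₂ = x₁ := by rwa [sub_eq_zero] at e21
    subst h
    exact ⟨y₂, by simpa using zero_mem_ratCone P u, h22, h11,
      by simpa using zero_mem_ratCone P u⟩
  by_cases e12 : y₁ - x₂ = 0
  · have h : y₁ = x₂ := by rwa [sub_eq_zero] at e12
    subst h
    exact ⟨y₁, h11, by simpa using zero_mem_ratCone P u,
      by simpa using zero_mem_ratCone P u, h22⟩
  by_cases e22 : y₂ - x₂ = 0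
  · have h : y₂ = x₂ := by rwa [sub_eq_zero] at e22
    subst h
    exact ⟨y₂, h21, by simpa using zero_mem_ratCone P u, h12,
      by simpa using zero_mem_ratCone P u⟩
  -- main case
  obtain ⟨a₁, m₁, hm₁, hx₁⟩ := exists_rep x₁
  obtain ⟨a₂, m₂, hm₂, hx₂⟩ := exists_rep x₂
  obtain ⟨b₁, m₃, hm₃, hy₁⟩ := exists_rep y₁
  obtain ⟨b₂, m₄, hm₄, hy₂⟩ := exists_rep y₂
  set M : ℕ := m₁ * m₂ * m₃ * m₄ with hM
  have hMpos : 0 < M := by positivity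
  have HX₁ : x₁ = ((m₂ * m₃ * m₄) • a₁) ⊗ₜ[ℤ] ((M : ℚ))⁻¹ := by
    have e : m₂ * m₃ * m₄ * m₁ = M := by rw [hM]; ring
    rw [hx₁, rescale a₁ (m₂ * m₃ * m₄) m₁ (by positivity), e]
  have HX₂ : x₂ = ((m₁ * m₃ * m₄) • a₂) ⊗ₜ[ℤ] ((M : ℚ))⁻¹ := by
    have e : m₁ * m₃ * m₄ * m₂ = M := by rw [hM]; ring
    rw [hx₂, rescale a₂ (m₁ * m₃ * m₄) m₂ (by positivity), e]
  have HY₁ : y₁ = ((m₁ * m₂ * m₄) • b₁) ⊗ₜ[ℤ] ((M : ℚ))⁻¹ := by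
    have e : m₁ * m₂ * m₄ * m₃ = M := by rw [hM]; ring
    rw [hy₁, rescale b₁ (m₁ * m₂ * m₄) m₃ (by positivity), e]
  have HY₂ : y₂ = ((m₁ * m₂ * m₃) • b₂) ⊗ₜ[ℤ] ((M : ℚ))⁻¹ := by
    have e : m₁ * m₂ * m₃ * m₄ = M := by rw [hM]
    rw [hy₂, rescale b₂ (m₁ * m₂ * m₃) m₄ (by positivity), e]
  set A₁ := (m₂ * m₃ * m₄) • a₁
  set A₂ := (m₁ * m₃ * m₄) • a₂
  set B₁ := (m₁ * m₂ * m₄) • b₁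
  set B₂ := (m₁ * m₂ * m₃) • b₂
  have key : ∀ (b a : G), b ⊗ₜ[ℤ] ((M : ℚ))⁻¹ - a ⊗ₜ[ℤ] ((M : ℚ))⁻¹ ∈ ratCone P u →
      b ⊗ₜ[ℤ] ((M : ℚ))⁻¹ - a ⊗ₜ[ℤ] ((M : ℚ))⁻¹ ≠ 0 → b - a ∈ P := by
    intro b a hmem hne
    have hd : b ⊗ₜ[ℤ] ((M : ℚ))⁻¹ - a ⊗ₜ[ℤ] ((M : ℚ))⁻¹
        = (b - a) ⊗ₜ[ℤ] ((M : ℚ))⁻¹ := by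
      rw [TensorProduct.sub_tmul]
    have hne' : b - a ≠ 0 := by
      intro h0
      apply hne
      rw [hd, h0, TensorProduct.zero_tmul]
    rw [hwu _ hne']
    intro s hs
    rcases hmem with h0 | hpos
    · exact absurd h0 hne
    · have hp := hpos s hs
      rw [hd, ratExt_tmul] at hp
      push_cast at hp
      have hMr : (0:ℝ) < ((M:ℝ))⁻¹ := by positivity
      by_contra hc
      push_neg at hc
      nlinarith
  have p11 : B₁ - A₁ ∈ P := key B₁ A₁ (by rw [← HX₁, ← HY₁]; exact h11)
    (by rw [← HX₁, ← HY₁]; exact e11)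
  have p21 : B₂ - A₁ ∈ P := key B₂ A₁ (by rw [← HX₁, ← HY₂]; exact h21)
    (by rw [← HX₁, ← HY₂]; exact e21)
  have p12 : B₁ - A₂ ∈ P := key B₁ A₂ (by rw [← HX₂, ← HY₁]; exact h12)
    (by rw [← HX₂, ← HY₁]; exact e12)
  have p22 : B₂ - A₂ ∈ P := key B₂ A₂ (by rw [← HX₂, ← HY₂]; exact h22)
    (by rw [← HX₂, ← HY₂]; exact e22)
  obtain ⟨z₀, m, n, hm, hn, c1, c2, c3, c4⟩ := hrR A₁ A₂ B₁ B₂ p11 p21 p12 p22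
  refine ⟨(n • z₀) ⊗ₜ[ℤ] (((m * M : ℕ) : ℚ))⁻¹, ?_, ?_, ?_, ?_⟩
  · rw [HX₁, rescale A₁ m M hm, ← TensorProduct.sub_tmul]
    exact tmul_mem_ratCone P u hsimple _ c1 _ (by positivity)
  · rw [HX₂, rescale A₂ m M hm, ← TensorProduct.sub_tmul]
    exact tmul_mem_ratCone P u hsimple _ c2 _ (by positivity)
  · rw [HY₁, rescale B₁ m M hm, ← TensorProduct.sub_tmul]
    exact tmul_mem_ratCone P u hsimple _ c3 _ (by positivity)
  · rw [HY₂, rescale B₂ m M hm, ← TensorProduct.sub_tmul]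
    exact tmul_mem_ratCone P u hsimple _ c4 _ (by positivity)
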